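/- For α, β ∈ ℂ with Re(α) > 0 and Re(β) > 0, the integral ∫₀^1 x^(α-1) (1-x)^(2β-1) (1 - x/3)^(2α-1) (1 - x/4)^(β-1) dx equals (2/3)^(2α) Γ(α) Γ(β) / Γ(α+β). -/

import Mathlib

/-!
The substitution `u = x (3 - x)² / 4` maps `(0, 1)` increasingly onto itself, and factors as
`u = (9/4) x (1 - x/3)²`, `1 - u = (1 - x/4) (1 - x)²`, `du = (9/4) (1 - x) (1 - x/3) dx`.
It therefore turns Euler's integral `B(α, β) = ∫₀¹ u^(α-1) (1-u)^(β-1) du = Γ(α)Γ(β)/Γ(α+β)`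
into `(9/4)^α` times the integral of the statement.
-/

open Complex MeasureTheory Set

noncomputable section

def lavoieSubst (x : ℝ) : ℝ := x * (3 - x) ^ 2 / 4

lemma lavoieSubst_eq (x : ℝ) : lavoieSubst x = 9 / 4 * (x * (1 - x / 3) ^ 2) := by
  unfold lavoieSubst; ring

lemma one_sub_lavoieSubst (x : ℝ) : 1 - lavoieSubst x = (1 - x / 4) * (1 - x) ^ 2 := by
  unfold lavoieSubst; ring

lemma hasDerivAt_lavoieSubst (x : ℝ) :
    HasDerivAt lavoieSubst (9 / 4 * ((1 - x) * (1 - x / 3))) x := by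
  refine (((hasDerivAt_id' x).mul (((hasDerivAt_id' x).const_sub 3).pow 2)).div_const 4).congr_deriv
    ?_
  simp only [Pi.pow_apply]
  ring

lemma continuous_lavoieSubst : Continuous lavoieSubst := by
  unfold lavoieSubst; fun_prop

lemma strictMonoOn_lavoieSubst : StrictMonoOn lavoieSubst (Icc 0 1) := by
  refine strictMonoOn_of_deriv_pos (convex_Icc 0 1) continuous_lavoieSubst.continuousOn ?_
  intro x hx
  rw [interior_Icc] at hx
  rw [(hasDerivAt_lavoieSubst x).deriv]
  have : 0 < 1 - x := by linarith [hx.2]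
  have : 0 < 1 - x / 3 := by linarith [hx.2]
  positivity

lemma lavoieSubst_image_Ioo : lavoieSubst '' Ioo 0 1 = Ioo 0 1 := by
  have h0 : lavoieSubst 0 = 0 := by norm_num [lavoieSubst]
  have h1 : lavoieSubst 1 = 1 := by norm_num [lavoieSubst]
  refine Subset.antisymm ?_ ?_
  · rintro _ ⟨x, hx, rfl⟩
    have hmono := strictMonoOn_lavoieSubst
    exact ⟨h0 ▸ hmono (left_mem_Icc.2 zero_le_one) (Ioo_subset_Icc_self hx) hx.1,
      h1 ▸ hmono (Ioo_subset_Icc_self hx) (right_mem_Icc.2 zero_le_one) hx.2⟩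
  · simpa only [h0, h1] using
      intermediate_value_Ioo zero_le_one continuous_lavoieSubst.continuousOn

lemma ofReal_cpow_eq_exp {r : ℝ} (hr : 0 < r) (c : ℂ) :
    (r : ℂ) ^ c = exp (c * Real.log r) := by
  rw [cpow_def_of_ne_zero (ofReal_ne_zero.2 hr.ne'), ← ofReal_log hr.le, mul_comm]

lemma ofReal_eq_exp {r : ℝ} (hr : 0 < r) : (r : ℂ) = exp (Real.log r) := by
  rw [← ofReal_exp, Real.exp_log hr]

def lavoieIntegrand (α β : ℂ) (x : ℝ) : ℂ :=
  (x : ℂ) ^ (α - 1) * ((1 - x : ℝ) : ℂ) ^ (2 * β - 1) *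
    ((1 - x / 3 : ℝ) : ℂ) ^ (2 * α - 1) * ((1 - x / 4 : ℝ) : ℂ) ^ (β - 1)

lemma abs_deriv_smul_betaIntegrand_lavoieSubst (α β : ℂ) {x : ℝ} (hx : x ∈ Ioo 0 1) :
    |9 / 4 * ((1 - x) * (1 - x / 3))| •
        ((lavoieSubst x : ℂ) ^ (α - 1) * (1 - (lavoieSubst x : ℂ)) ^ (β - 1)) =
      ((9 / 4 : ℝ) : ℂ) ^ α * lavoieIntegrand α β x := by
  obtain ⟨hx0, hx1⟩ := hx
  have h1 : 0 < 1 - x := by linarith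
  have h3 : 0 < 1 - x / 3 := by linarith
  have h4 : 0 < 1 - x / 4 := by linarith
  have hu : 0 < lavoieSubst x := by rw [lavoieSubst_eq]; positivity
  have hv : 0 < 1 - lavoieSubst x := by rw [one_sub_lavoieSubst]; positivity
  have log_u : Real.log (lavoieSubst x) =
      Real.log (9 / 4) + Real.log x + 2 * Real.log (1 - x / 3) := by
    rw [lavoieSubst_eq, Real.log_mul (by norm_num) (by positivity),
      Real.log_mul hx0.ne' (by positivity), Real.log_pow, Nat.cast_ofNat, add_assoc]
  have log_v : Real.log (1 - lavoieSubst x) = Real.log (1 - x / 4) + 2 * Real.log (1 - x) := by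
    rw [one_sub_lavoieSubst, Real.log_mul h4.ne' (by positivity), Real.log_pow, Nat.cast_ofNat]
  have log_du : Real.log (9 / 4 * ((1 - x) * (1 - x / 3))) =
      Real.log (9 / 4) + Real.log (1 - x) + Real.log (1 - x / 3) := by
    rw [Real.log_mul (by norm_num) (by positivity), Real.log_mul h1.ne' h3.ne', add_assoc]
  rw [abs_of_pos (by positivity), real_smul, ← ofReal_one, ← ofReal_sub, lavoieIntegrand,
    ofReal_eq_exp (by positivity), ofReal_cpow_eq_exp hu, ofReal_cpow_eq_exp hv,
    ofReal_cpow_eq_exp (by norm_num), ofReal_cpow_eq_exp hx0, ofReal_cpow_eq_exp h1,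
    ofReal_cpow_eq_exp h3, ofReal_cpow_eq_exp h4, log_u, log_v, log_du]
  simp only [← exp_add, ofReal_add, ofReal_mul, ofReal_ofNat, ofReal_one]
  congr 1
  ring

lemma betaIntegral_eq_lavoieIntegral (α β : ℂ) :
    betaIntegral α β = ((9 / 4 : ℝ) : ℂ) ^ α * ∫ x in (0 : ℝ)..1, lavoieIntegrand α β x := by
  rw [betaIntegral, intervalIntegral.integral_of_le zero_le_one, integral_Ioc_eq_integral_Ioo,
    ← lavoieSubst_image_Ioo, integral_image_eq_integral_abs_deriv_smul measurableSet_Ioo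
      (fun x _ ↦ (hasDerivAt_lavoieSubst x).hasDerivWithinAt)
      (strictMonoOn_lavoieSubst.injOn.mono Ioo_subset_Icc_self),
    intervalIntegral.integral_of_le zero_le_one, integral_Ioc_eq_integral_Ioo, ← integral_const_mul]
  exact setIntegral_congr_fun measurableSet_Ioo
    fun x hx ↦ abs_deriv_smul_betaIntegrand_lavoieSubst α β hx

lemma two_thirds_cpow_two_mul_mul_nine_fourths_cpow (α : ℂ) :
    ((2 / 3 : ℝ) : ℂ) ^ (2 * α) * ((9 / 4 : ℝ) : ℂ) ^ α = 1 := by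
  rw [← ofReal_ofNat 2, cpow_mul_ofReal_nonneg (by norm_num),
    ← mul_cpow_ofReal_nonneg (by positivity) (by norm_num), ← ofReal_mul]
  norm_num

end

theorem stmt3 (α β : ℂ) (hα : 0 < α.re) (hβ : 0 < β.re) :
    ∫ x in (0:ℝ)..1,
        (x : ℂ) ^ (α - 1) * ((1 - x : ℝ) : ℂ) ^ (2 * β - 1) *
        ((1 - x / 3 : ℝ) : ℂ) ^ (2 * α - 1) * ((1 - x / 4 : ℝ) : ℂ) ^ (β - 1) =
    ((2 / 3 : ℝ) : ℂ) ^ (2 * α) * Complex.Gamma α * Complex.Gamma β / Complex.Gamma (α + β) := by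
  have hΓ : Gamma (α + β) ≠ 0 := Gamma_ne_zero_of_re_pos (by rw [add_re]; positivity)
  rw [mul_assoc, mul_div_assoc, Gamma_mul_Gamma_eq_betaIntegral hα hβ,
    mul_div_cancel_left₀ _ hΓ, betaIntegral_eq_lavoieIntegral, ← mul_assoc,
    two_thirds_cpow_two_mul_mul_nine_fourths_cpow, one_mul]
  rfl
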